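/- arXiv:cs/9812022 — 5 statements merged into one kernel-verified Lean document; each statement's English description precedes it below -/
import Mathlib

section
/- For each m > 0 and k > 0 there exists a strict (m,k)-3-partitioning-system, i.e., a family Σ of at least m pairwise class-disjoint 3-partitions of some finite base set S such that every class has at least k elements, and for all classes S', S'', S''' ∈ classes(Σ), either {S',S'',S'''} is one of the 3-partitions in Σ or S' ∪ S'' ∪ S''' is a proper subset of S. Moreover such a system exists with |S| ≤ 27m³ + 2m + 3k. -/
/-- `σ` is a 3-partition of the finite set `S`: a set of three nonempty
pairwise disjoint subsets of `S` whose union is `S`. -/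
def ThreePartition {α : Type*} [DecidableEq α] (S : Finset α) (σ : Finset (Finset α)) : Prop :=
  σ.card = 3 ∧ (∀ c ∈ σ, c.Nonempty) ∧ σ.biUnion id = S ∧
    ∀ c ∈ σ, ∀ d ∈ σ, c ≠ d → Disjoint c d

/-!
Colour the points of the base set by functions `f : Fin m → Fin 3` and let the `i`-th partition
split the points according to the value `f i`. Three classes `{f i = x}`, `{f j = y}`, `{f l = z}`
miss a point `f` exactly when `f` avoids the three constraints, and such an `f` exists unless
`i = j = l` and `{x, y, z} = Fin 3`, i.e. unless the classes form one of the partitions. So it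
suffices that the base set contains, for each of the `(3m)³` triples of constraints, one point
avoiding it whenever possible, plus `k` points of each constant colouring to make every class
large.
-/

open Finset

section Avoidance

variable {ι κ : Type*}

def Avoids (f : ι → κ) (Q : Finset (ι × κ)) : Prop :=
  ∀ q ∈ Q, f q.1 ≠ q.2

theorem exists_avoids_iff {Q : Finset (ι × κ)} :
    (∃ f : ι → κ, Avoids f Q) ↔ ∀ i, ∃ t, (i, t) ∉ Q := by
  constructor
  · rintro ⟨f, hf⟩ i
    exact ⟨f i, fun h => hf _ h rfl⟩
  · intro h
    choose f hf using h
    exact ⟨f, fun q hq hfq => hf q.1 (hfq ▸ hq)⟩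

theorem exists_eq_singleton_product_univ_of_not_avoids [Fintype κ] [DecidableEq ι]
    [DecidableEq κ] {Q : Finset (ι × κ)} (hQ : Q.card ≤ Fintype.card κ)
    (h : ¬∃ f : ι → κ, Avoids f Q) : ∃ c, Q = {c} ×ˢ univ := by
  rw [exists_avoids_iff] at h
  push Not at h
  obtain ⟨c, hc⟩ := h
  refine ⟨c, (eq_of_subset_of_card_le ?_ ?_).symm⟩
  · rintro ⟨i, t⟩ hq
    simp only [mem_product, mem_singleton, mem_univ, and_true] at hq
    exact hq ▸ hc t
  · simpa using hQ

theorem avoids_update_const [DecidableEq ι] {i j : ι} (hij : i ≠ j) (t u : Fin 3) :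
    Avoids (Function.update (fun _ => t) j (u + 1)) {(i, t + 1), (i, t + 2), (j, u)} := by
  have ht : t ≠ t + 1 ∧ t ≠ t + 2 := by revert t; decide
  have hu : u + 1 ≠ u := by revert u; decide
  simp [Avoids, Function.update_of_ne hij, ht, hu]

end Avoidance

section Coloring

variable {α ι : Type*} (col : α → ι → Fin 3) (S : Finset α)

def colorClass (i : ι) (t : Fin 3) : Finset α :=
  S.filter fun a => col a i = t

def colorPartition [DecidableEq α] (i : ι) : Finset (Finset α) :=
  univ.image (colorClass col S i)

def colorSystem [DecidableEq α] [Fintype ι] : Finset (Finset (Finset α)) :=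
  univ.image (colorPartition col S)

def RealizesAvoidableTriples [DecidableEq ι] : Prop :=
  ∀ q₁ q₂ q₃ : ι × Fin 3,
    (∃ f, Avoids f {q₁, q₂, q₃}) → ∃ a ∈ S, Avoids (col a) {q₁, q₂, q₃}

variable {col S}

@[simp]
theorem mem_colorClass {a : α} {i : ι} {t : Fin 3} :
    a ∈ colorClass col S i t ↔ a ∈ S ∧ col a i = t :=
  mem_filter

theorem colorClass_subset (i : ι) (t : Fin 3) : colorClass col S i t ⊆ S :=
  filter_subset _ _

theorem disjoint_colorClass (i : ι) {t u : Fin 3} (htu : t ≠ u) :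
    Disjoint (colorClass col S i t) (colorClass col S i u) :=
  disjoint_filter.mpr fun _ _ ht hu => htu (ht ▸ hu)

theorem colorClass_inj [DecidableEq ι] (hne : ∀ i t, (colorClass col S i t).Nonempty)
    (hS : RealizesAvoidableTriples col S) {i j : ι} {t u : Fin 3} :
    colorClass col S i t = colorClass col S j u ↔ i = j ∧ t = u := by
  refine ⟨fun heq => ?_, fun ⟨hij, htu⟩ => hij ▸ htu ▸ rfl⟩
  by_cases hij : i = j
  · subst hij
    obtain ⟨a, ha⟩ := hne i t
    have hu := heq ▸ ha
    rw [mem_colorClass] at ha hu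
    exact ⟨rfl, ha.2.symm.trans hu.2⟩
  -- a point coloured `t` at `i` but not `u` at `j` separates the two classes
  · obtain ⟨a, haS, ha⟩ := hS _ _ _ ⟨_, avoids_update_const hij t u⟩
    have hai : col a i = t := by
      have key : ∀ s t : Fin 3, s ≠ t + 1 → s ≠ t + 2 → s = t := by decide
      exact key _ _ (ha (i, t + 1) (by simp)) (ha (i, t + 2) (by simp))
    have hmem : a ∈ colorClass col S j u := heq ▸ mem_colorClass.mpr ⟨haS, hai⟩
    exact absurd (mem_colorClass.mp hmem).2 (ha (j, u) (by simp))

theorem threePartition_colorPartition [DecidableEq α] [DecidableEq ι]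
    (hne : ∀ i t, (colorClass col S i t).Nonempty) (hS : RealizesAvoidableTriples col S)
    (i : ι) : ThreePartition S (colorPartition col S i) := by
  refine ⟨?_, ?_, ?_, ?_⟩
  · rw [colorPartition,
      card_image_of_injective _ fun t u h => ((colorClass_inj hne hS).mp h).2]
    simp
  · simp only [colorPartition, mem_image, mem_univ, true_and, forall_exists_index]
    rintro _ t rfl
    exact hne i t
  · ext a
    simp only [colorPartition, mem_biUnion, mem_image, mem_univ, true_and, id,
      exists_exists_eq_and, mem_colorClass]
    exact ⟨fun ⟨_, ha, _⟩ => ha, fun ha => ⟨_, ha, rfl⟩⟩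
  · simp only [colorPartition, mem_image, mem_univ, true_and]
    rintro _ ⟨t, rfl⟩ _ ⟨u, rfl⟩ hclasses
    exact disjoint_colorClass i fun htu => hclasses (htu ▸ rfl)

theorem disjoint_colorPartition [DecidableEq α] [DecidableEq ι]
    (hne : ∀ i t, (colorClass col S i t).Nonempty) (hS : RealizesAvoidableTriples col S)
    {i j : ι} (hij : i ≠ j) : Disjoint (colorPartition col S i) (colorPartition col S j) := by
  simp only [colorPartition, disjoint_left, mem_image, mem_univ, true_and, not_exists]
  rintro _ ⟨t, rfl⟩ u heq
  exact hij ((colorClass_inj hne hS).mp heq.symm).1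

theorem colorPartition_injective [DecidableEq α] [DecidableEq ι]
    (hne : ∀ i t, (colorClass col S i t).Nonempty) (hS : RealizesAvoidableTriples col S) :
    Function.Injective (colorPartition col S) := by
  intro i j heq
  by_contra hij
  have hdisj := disjoint_colorPartition hne hS hij
  rw [heq, disjoint_self_iff_empty] at hdisj
  exact ne_empty_of_mem (Finset.mem_image_of_mem (colorClass col S j) (mem_univ 0)) hdisj

theorem threePartition_of_mem_colorSystem [DecidableEq α] [Fintype ι] [DecidableEq ι]
    (hne : ∀ i t, (colorClass col S i t).Nonempty) (hS : RealizesAvoidableTriples col S)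
    {σ : Finset (Finset α)} (hσ : σ ∈ colorSystem col S) : ThreePartition S σ := by
  obtain ⟨i, -, rfl⟩ := mem_image.mp hσ
  exact threePartition_colorPartition hne hS i

theorem disjoint_of_mem_colorSystem [DecidableEq α] [Fintype ι] [DecidableEq ι]
    (hne : ∀ i t, (colorClass col S i t).Nonempty) (hS : RealizesAvoidableTriples col S)
    {σ σ' : Finset (Finset α)} (hσ : σ ∈ colorSystem col S)
    (hσ' : σ' ∈ colorSystem col S) (hσσ' : σ ≠ σ') : Disjoint σ σ' := by
  obtain ⟨i, -, rfl⟩ := mem_image.mp hσ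
  obtain ⟨j, -, rfl⟩ := mem_image.mp hσ'
  exact disjoint_colorPartition hne hS fun hij => hσσ' (hij ▸ rfl)

theorem card_colorSystem [DecidableEq α] [Fintype ι] [DecidableEq ι]
    (hne : ∀ i t, (colorClass col S i t).Nonempty) (hS : RealizesAvoidableTriples col S) :
    (colorSystem col S).card = Fintype.card ι := by
  rw [colorSystem, card_image_of_injective _ (colorPartition_injective hne hS), card_univ]

theorem mem_biUnion_colorSystem [DecidableEq α] [Fintype ι] {C : Finset α} :
    C ∈ (colorSystem col S).biUnion id ↔ ∃ i t, colorClass col S i t = C := by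
  simp [colorSystem, colorPartition]

theorem colorClass_triple_mem_or_ssubset [DecidableEq α] [Fintype ι] [DecidableEq ι]
    (hS : RealizesAvoidableTriples col S) (i j l : ι) (x y z : Fin 3) :
    ({colorClass col S i x, colorClass col S j y, colorClass col S l z} : Finset (Finset α)) ∈
        colorSystem col S ∨
      colorClass col S i x ∪ colorClass col S j y ∪ colorClass col S l z ⊂ S := by
  set Q : Finset (ι × Fin 3) := {(i, x), (j, y), (l, z)}
  by_cases hQ : ∃ f, Avoids f Q
  · right
    obtain ⟨a, haS, ha⟩ := hS _ _ _ hQ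
    rw [ssubset_iff_of_subset (union_subset (union_subset (colorClass_subset i x)
      (colorClass_subset j y)) (colorClass_subset l z))]
    refine ⟨a, haS, ?_⟩
    simp only [mem_union, mem_colorClass, haS, true_and, not_or]
    exact ⟨⟨ha (i, x) (by simp), ha (j, y) (by simp)⟩, ha (l, z) (by simp)⟩
  · left
    obtain ⟨c, hc⟩ := exists_eq_singleton_product_univ_of_not_avoids card_le_three hQ
    have hclasses : ({colorClass col S i x, colorClass col S j y, colorClass col S l z} :
        Finset (Finset α)) = colorPartition col S c := by
      calc _ = Q.image (Function.uncurry (colorClass col S)) := by simp [Q, image_insert]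
        _ = colorPartition col S c := by ext; simp [hc, colorPartition]
    exact hclasses ▸ Finset.mem_image_of_mem _ (mem_univ c)

end Coloring

section Construction

variable {ι : Type*}

open Classical in
noncomputable def avoidingColoring (Q : Finset (ι × Fin 3)) : ι → Fin 3 :=
  if h : ∃ f, Avoids f Q then h.choose else fun _ => 0

theorem avoids_avoidingColoring {Q : Finset (ι × Fin 3)} (h : ∃ f, Avoids f Q) :
    Avoids (avoidingColoring Q) Q := by
  rw [avoidingColoring, dif_pos h]
  exact h.choose_spec

variable (ι) [Fintype ι]

/-- The base set consists of encoded pairs `(copy index, colouring)`; this reads off the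
colouring. -/
def decodeColoring [Encodable ι] (n : ℕ) : ι → Fin 3 :=
  ((Encodable.decode (α := ℕ × (ι → Fin 3)) n).map Prod.snd).getD fun _ => 0

theorem decodeColoring_encode [Encodable ι] (p : ℕ × (ι → Fin 3)) :
    decodeColoring ι (Encodable.encode p) = p.2 := by
  simp only [decodeColoring, Encodable.encodek, Option.map_some, Option.getD_some]

variable [DecidableEq ι] (k : ℕ)

/-- The first coordinate only serves to make `k` copies of each constant colouring. -/
def constantPoints : Finset (ℕ × (ι → Fin 3)) :=
  (range k ×ˢ univ).image fun p => (p.1, fun _ => p.2)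

noncomputable def avoidingPoints : Finset (ℕ × (ι → Fin 3)) :=
  (univ : Finset ((ι × Fin 3) × (ι × Fin 3) × (ι × Fin 3))).image
    fun τ => (0, avoidingColoring {τ.1, τ.2.1, τ.2.2})

variable [Encodable ι]

noncomputable def baseSet : Finset ℕ :=
  (constantPoints ι k ∪ avoidingPoints ι).image Encodable.encode

theorem encode_mem_baseSet {p : ℕ × (ι → Fin 3)}
    (hp : p ∈ constantPoints ι k ∪ avoidingPoints ι) : Encodable.encode p ∈ baseSet ι k :=
  mem_image_of_mem _ hp

theorem le_card_colorClass_baseSet (i : ι) (t : Fin 3) :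
    k ≤ (colorClass (decodeColoring ι) (baseSet ι k) i t).card := by
  have hmaps : Set.MapsTo (fun s => Encodable.encode ((s, fun _ => t) : ℕ × (ι → Fin 3)))
      (range k) (colorClass (decodeColoring ι) (baseSet ι k) i t) := by
    intro s hs
    rw [mem_coe, mem_colorClass, decodeColoring_encode]
    refine ⟨encode_mem_baseSet ι k
      (mem_union_left _ (mem_image.mpr ⟨(s, t), ?_, rfl⟩)), rfl⟩
    simpa using hs
  have hinj : Set.InjOn (fun s => Encodable.encode ((s, fun _ => t) : ℕ × (ι → Fin 3)))
      (range k) := fun s _ s' _ h => congrArg Prod.fst (Encodable.encode_injective h)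
  simpa using card_le_card_of_injOn _ hmaps hinj

theorem realizesAvoidableTriples_baseSet :
    RealizesAvoidableTriples (decodeColoring ι) (baseSet ι k) := by
  intro q₁ q₂ q₃ h
  refine ⟨_, encode_mem_baseSet ι k
    (mem_union_right _ (mem_image_of_mem _ (mem_univ (q₁, q₂, q₃)))), ?_⟩
  rw [decodeColoring_encode]
  exact avoids_avoidingColoring h

theorem card_baseSet_le :
    (baseSet ι k).card ≤ 27 * Fintype.card ι ^ 3 + 3 * k := by
  calc (baseSet ι k).card ≤ (constantPoints ι k).card + (avoidingPoints ι).card :=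
        card_image_le.trans (card_union_le _ _)
    _ ≤ 3 * k + 27 * Fintype.card ι ^ 3 := by
        gcongr
        · exact card_image_le.trans (by simp [mul_comm])
        · exact card_image_le.trans (le_of_eq (by simp; ring))
    _ = 27 * Fintype.card ι ^ 3 + 3 * k := add_comm _ _

end Construction

theorem stmt_1_general (m k : ℕ) (hk : 0 < k) :
    ∃ (S : Finset ℕ) (F : Finset (Finset (Finset ℕ))),
      (∀ σ ∈ F, ThreePartition S σ) ∧
      (∀ σ ∈ F, ∀ σ' ∈ F, σ ≠ σ' → Disjoint σ σ') ∧
      m ≤ F.card ∧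
      (∀ C ∈ F.biUnion id, k ≤ C.card) ∧
      (∀ C₁ ∈ F.biUnion id, ∀ C₂ ∈ F.biUnion id, ∀ C₃ ∈ F.biUnion id,
          ({C₁, C₂, C₃} : Finset (Finset ℕ)) ∈ F ∨ C₁ ∪ C₂ ∪ C₃ ⊂ S) ∧
      S.card ≤ 27 * m ^ 3 + 2 * m + 3 * k := by
  set col := decodeColoring (Fin m)
  set S := baseSet (Fin m) k
  have hcard : ∀ i t, k ≤ (colorClass col S i t).card := le_card_colorClass_baseSet (Fin m) k
  have hne : ∀ i t, (colorClass col S i t).Nonempty :=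
    fun i t => card_pos.mp (hk.trans_le (hcard i t))
  have hS : RealizesAvoidableTriples col S := realizesAvoidableTriples_baseSet (Fin m) k
  refine ⟨S, colorSystem col S, fun σ => threePartition_of_mem_colorSystem hne hS,
    fun σ hσ σ' hσ' => disjoint_of_mem_colorSystem hne hS hσ hσ',
    by simp [card_colorSystem hne hS], ?_, ?_, ?_⟩
  · intro C hC
    obtain ⟨i, t, rfl⟩ := mem_biUnion_colorSystem.mp hC
    exact hcard i t
  · intro C₁ h₁ C₂ h₂ C₃ h₃
    obtain ⟨i, x, rfl⟩ := mem_biUnion_colorSystem.mp h₁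
    obtain ⟨j, y, rfl⟩ := mem_biUnion_colorSystem.mp h₂
    obtain ⟨l, z, rfl⟩ := mem_biUnion_colorSystem.mp h₃
    exact colorClass_triple_mem_or_ssubset hS i j l x y z
  · have hS_card : S.card ≤ 27 * m ^ 3 + 3 * k := by
      simpa using card_baseSet_le (Fin m) k
    omega

/-- For all `m, k > 0` there exists a strict `(m,k)`-3-partitioning-system:
a family `F` of at least `m` pairwise class-disjoint 3-partitions of some
finite base set `S`, every class having at least `k` elements, such that the
only triples of classes whose union is `S` are the members of `F`;
moreover `|S| ≤ 27m³ + 2m + 3k`. -/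
theorem stmt_1 (m k : ℕ) (hm : 0 < m) (hk : 0 < k) :
    ∃ (S : Finset ℕ) (F : Finset (Finset (Finset ℕ))),
      (∀ σ ∈ F, ThreePartition S σ) ∧
      (∀ σ ∈ F, ∀ σ' ∈ F, σ ≠ σ' → Disjoint σ σ') ∧
      m ≤ F.card ∧
      (∀ C ∈ F.biUnion id, k ≤ C.card) ∧
      (∀ C₁ ∈ F.biUnion id, ∀ C₂ ∈ F.biUnion id, ∀ C₃ ∈ F.biUnion id,
          ({C₁, C₂, C₃} : Finset (Finset ℕ)) ∈ F ∨ C₁ ∪ C₂ ∪ C₃ ⊂ S) ∧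
      S.card ≤ 27 * m ^ 3 + 2 * m + 3 * k :=
  stmt_1_general m k hk
end

section
/- Let Q be a conjunctive query with variable set containing Γ = {V_{ij} | 1 ≤ i < j ≤ 8}, and suppose atoms(Q) contains a set Π = {P_1,...,P_8} of 8 atoms such that var(P_i) ∩ Γ = {V_{ki} : k < i} ∪ {V_{ik} : i < k}, and no atom outside Π contains any variable of Γ. If Q admits a pure query decomposition (T,λ) of width 4, then there exist two adjacent vertices p_1, p_2 of T with |λ(p_1)| = |λ(p_2)| = 4 and λ(p_1) ∪ λ(p_2) = Π. -/
/-- A rooted tree on vertex type `P`, given by a parent function. -/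
structure RTree (P : Type) where
  root : P
  parent : P → P
  parent_root : parent root = root
  reaches : ∀ p : P, ∃ n : ℕ, parent^[n] p = root

namespace RTree

variable {P : Type}

/-- `c` is a child of `p` in the rooted tree `T`. -/
def child (T : RTree P) (c p : P) : Prop := c ≠ T.root ∧ T.parent c = p

/-- `p` belongs to the subtree `T_s` rooted at `s`. -/
def inSubtree (T : RTree P) (s p : P) : Prop := ∃ n : ℕ, T.parent^[n] p = s

/-- The undirected adjacency graph of the rooted tree. -/
def graph (T : RTree P) : SimpleGraph P where
  Adj p q := (p ≠ T.root ∧ T.parent p = q) ∨ (q ≠ T.root ∧ T.parent q = p)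
  symm := by
    constructor
    intro p q h
    rcases h with h | h
    · exact Or.inr h
    · exact Or.inl h
  loopless := by
    constructor
    intro p h
    have hh : p ≠ T.root ∧ T.parent p = p := by rcases h with h | h <;> exact h
    obtain ⟨n, hn⟩ := T.reaches p
    have hfix : ∀ m : ℕ, T.parent^[m] p = p := by
      intro m
      induction m with
      | zero => rfl
      | succ m ih => rw [Function.iterate_succ_apply, hh.2]; exact ih
    exact hh.1 (by rw [← hfix n]; exact hn)

end RTree

/-- A conjunctive query: a set of atoms `A`, each with its set of variables. -/
structure CQ (V A : Type) where
  var : A → Set V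

namespace CQ

variable {V A : Type}

/-- The variables of the query. -/
def vars (Q : CQ V A) : Set V := ⋃ a : A, Q.var a

/-- The variables occurring in a set of atoms. -/
def varSet (Q : CQ V A) (S : Set A) : Set V := ⋃ a ∈ S, Q.var a

/-- `x` and `y` are `[S]`-adjacent. -/
def adjOut (Q : CQ V A) (S : Set V) (x y : V) : Prop :=
  ∃ a : A, x ∈ Q.var a ∧ y ∈ Q.var a ∧ x ∉ S ∧ y ∉ S

/-- `W` is an `[S]`-connected set of variables. -/
def ConnSet (Q : CQ V A) (S W : Set V) : Prop :=
  W ⊆ Q.vars \ S ∧ ∀ x ∈ W, ∀ y ∈ W, Relation.ReflTransGen (Q.adjOut S) x y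

/-- `C` is an `[S]`-component: a maximal nonempty `[S]`-connected set. -/
def IsComp (Q : CQ V A) (S C : Set V) : Prop :=
  C.Nonempty ∧ Q.ConnSet S C ∧ ∀ C' : Set V, Q.ConnSet S C' → C ⊆ C' → C' = C

/-- `Q` is acyclic: it admits a join tree, i.e. a tree on its atoms in which
the occurrences of each variable induce a connected subtree. -/
def acyclic (Q : CQ V A) : Prop :=
  ∃ T : RTree A, ∀ v ∈ Q.vars, (T.graph.induce {a : A | v ∈ Q.var a}).Connected

end CQ

/-- A hypertree decomposition of `Q` on the rooted tree `T`. -/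
structure HTD {V A P : Type} (Q : CQ V A) (T : RTree P) where
  χ : P → Set V
  lam : P → Set A
  cover : ∀ a : A, ∃ p : P, Q.var a ⊆ χ p
  conn : ∀ v ∈ Q.vars, (T.graph.induce {p : P | v ∈ χ p}).Connected
  chiSub : ∀ p : P, χ p ⊆ Q.varSet (lam p)
  special : ∀ p : P, Q.varSet (lam p) ∩ (⋃ q ∈ {q : P | T.inSubtree p q}, χ q) ⊆ χ p

namespace HTD

variable {V A P : Type} {Q : CQ V A} {T : RTree P}

/-- `χ(T_s)`: the union of the `χ` labels over the subtree rooted at `s`. -/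
def χSub (D : HTD Q T) (s : P) : Set V := ⋃ q ∈ {q : P | T.inSubtree s q}, D.χ q

/-- The decomposition has width at most `k`. -/
def widthLE (D : HTD Q T) (k : ℕ) : Prop :=
  ∀ p : P, (D.lam p).Finite ∧ (D.lam p).ncard ≤ k

/-- The decomposition is complete. -/
def complete (D : HTD Q T) : Prop := ∀ a : A, ∃ p : P, Q.var a ⊆ D.χ p ∧ a ∈ D.lam p

/-- `vertices(W, HD)`: the vertices whose `χ` label meets `W`. -/
def verts (D : HTD Q T) (W : Set V) : Set P := {p : P | (D.χ p ∩ W).Nonempty}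

/-- Normal form of a hypertree decomposition. -/
def NF (D : HTD Q T) : Prop := ∀ r s : P, T.child s r →
  (∃! C : Set V, Q.IsComp (D.χ r) C ∧ D.χSub s = C ∪ (D.χ s ∩ D.χ r)) ∧
  (∀ C : Set V, Q.IsComp (D.χ r) C → D.χSub s = C ∪ (D.χ s ∩ D.χ r) →
     (D.χ s ∩ C).Nonempty) ∧
  (Q.varSet (D.lam s) ∩ D.χ r ⊆ D.χ s)

/-- `tc` is the `treecomp` function of a normal-form decomposition. -/
def IsTreeComp (D : HTD Q T) (tc : P → Set V) : Prop :=
  tc T.root = Q.vars ∧ ∀ s : P, s ≠ T.root →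
    Q.IsComp (D.χ (T.parent s)) (tc s) ∧
    D.χSub s = tc s ∪ (D.χ s ∩ D.χ (T.parent s))

end HTD

/-- `Q` has hypertree width at most `k`. -/
def CQ.hwLE {V A : Type} (Q : CQ V A) (k : ℕ) : Prop :=
  ∃ (P : Type) (T : RTree P) (D : HTD Q T), D.widthLE k

/-- The hypertree width of `Q`. -/
noncomputable def CQ.hw {V A : Type} (Q : CQ V A) : ℕ := sInf {k : ℕ | Q.hwLE k}

/-- A query decomposition of `Q` on the rooted tree `T`
(labels may contain both atoms and variables). -/
structure QDec {V A P : Type} (Q : CQ V A) (T : RTree P) where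
  la : P → Set A
  lv : P → Set V
  coverA : ∀ a : A, ∃ p : P, a ∈ la p
  connA : ∀ a : A, (T.graph.induce {p : P | a ∈ la p}).Connected
  connV : ∀ v ∈ Q.vars,
    (T.graph.induce {p : P | v ∈ lv p ∨ ∃ a ∈ la p, v ∈ Q.var a}).Connected

namespace QDec

variable {V A P : Type} {Q : CQ V A} {T : RTree P}

/-- A query decomposition is pure if labels contain atoms only. -/
def pure (D : QDec Q T) : Prop := ∀ p : P, D.lv p = ∅

/-- The query decomposition has width at most `k`. -/
def widthLE (D : QDec Q T) (k : ℕ) : Prop :=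
  ∀ p : P, (D.la p).Finite ∧ (D.lv p).Finite ∧ (D.la p).ncard + (D.lv p).ncard ≤ k

end QDec

/-- `Q` has query width at most `k`. -/
def CQ.qwLE {V A : Type} (Q : CQ V A) (k : ℕ) : Prop :=
  ∃ (P : Type) (T : RTree P) (D : QDec Q T), D.widthLE k

/-- The query width of `Q`. -/
noncomputable def CQ.qw {V A : Type} (Q : CQ V A) : ℕ := sInf {k : ℕ | Q.qwLE k}

/-!
Let `Sᵢ` be the set of vertices whose label contains `Pᵢ`. The variable `V_{ij}` occurs only
in `Pᵢ` and `Pⱼ`, so `Sᵢ ∪ Sⱼ` is connected for `i ≠ j`. Let `t` be the highest vertex of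
`Sₘ`, chosen as deep as possible among the highest vertices of all the `Sᵢ`. If the highest
vertex of `Sᵢ` is not `t`, it lies outside the subtree of `t`, so a path to it in `Sᵢ ∪ Sₘ`
leaves that subtree through the edge from `t` to its parent, which is not in `Sₘ`, hence in
`Sᵢ`. So every `Pᵢ` lies in `λ(t) ∪ λ(parent t)`, and counting (`8 ≤ 4 + 4`) forces both
labels to have four atoms and their union to be `Π`.
-/

namespace RTree

variable {P : Type} {T : RTree P}

noncomputable def depth (T : RTree P) (p : P) : ℕ := sInf {n | T.parent^[n] p = T.root}

lemma iterate_depth (p : P) : T.parent^[T.depth p] p = T.root := Nat.sInf_mem (T.reaches p)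

lemma depth_le_of_iterate_eq_root {p : P} {n : ℕ} (h : T.parent^[n] p = T.root) :
    T.depth p ≤ n :=
  Nat.sInf_le h

lemma iterate_root (n : ℕ) : T.parent^[n] T.root = T.root :=
  Function.iterate_fixed T.parent_root n

lemma depth_parent_lt {p : P} (hp : p ≠ T.root) : T.depth (T.parent p) < T.depth p := by
  obtain ⟨k, hk⟩ : ∃ k, T.depth p = k + 1 :=
    Nat.exists_eq_succ_of_ne_zero fun h0 => hp (by simpa [h0] using iterate_depth (T := T) p)
  have : T.parent^[k] (T.parent p) = T.root := by
    rw [← Function.iterate_succ_apply, Nat.succ_eq_add_one, ← hk, iterate_depth]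
  have := depth_le_of_iterate_eq_root this
  omega

lemma inSubtree_refl (p : P) : T.inSubtree p p := ⟨0, rfl⟩

lemma inSubtree_root (p : P) : T.inSubtree T.root p := T.reaches p

lemma depth_le_of_inSubtree {s p : P} (h : T.inSubtree s p) : T.depth s ≤ T.depth p := by
  obtain ⟨n, rfl⟩ := h
  apply depth_le_of_iterate_eq_root
  rw [← Function.iterate_add_apply, add_comm, Function.iterate_add_apply, iterate_depth,
    iterate_root]

lemma eq_of_inSubtree_of_depth_le {s p : P} (h : T.inSubtree s p)
    (hd : T.depth p ≤ T.depth s) : s = p := by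
  obtain ⟨_ | k, hk⟩ := h
  · exact hk.symm
  by_cases hp : p = T.root
  · subst hp
    rw [iterate_root] at hk
    exact hk.symm
  · have : T.depth s ≤ T.depth (T.parent p) := depth_le_of_inSubtree ⟨k, hk⟩
    have := depth_parent_lt hp
    omega

lemma not_inSubtree_parent {p : P} (hp : p ≠ T.root) : ¬ T.inSubtree p (T.parent p) :=
  fun h => (depth_le_of_inSubtree h).not_gt (depth_parent_lt hp)

lemma eq_parent_of_adj {s p q : P} (hpq : T.graph.Adj p q) (hp : T.inSubtree s p)
    (hq : ¬ T.inSubtree s q) : q = T.parent s := by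
  obtain ⟨n, hn⟩ := hp
  rcases hpq with ⟨-, rfl⟩ | ⟨-, rfl⟩
  · cases n with
    | zero => rw [← hn]; rfl
    | succ k => exact absurd ⟨k, hn⟩ hq
  · exact absurd ⟨n + 1, hn⟩ hq

lemma parent_mem_of_connected {S : Set P} (hS : (T.graph.induce S).Connected) {s p : P}
    (hs : s ∈ S) (hp : p ∈ S) (hsp : ¬ T.inSubtree s p) : T.parent s ∈ S := by
  obtain ⟨w⟩ := hS.preconnected ⟨s, hs⟩ ⟨p, hp⟩
  obtain ⟨d, -, hd₁, hd₂⟩ :=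
    w.exists_boundary_dart {z | T.inSubtree s z} (inSubtree_refl s) hsp
  rw [← eq_parent_of_adj d.adj hd₁ hd₂]
  exact d.snd.2

lemma exists_forall_inSubtree {S : Set P} (hS : (T.graph.induce S).Connected) :
    ∃ t ∈ S, ∀ p ∈ S, T.inSubtree t p := by
  obtain ⟨t, htS, hmin⟩ := (measure T.depth).wf.has_min S (hS.nonempty.elim fun p => ⟨p, p.2⟩)
  refine ⟨t, htS, fun p hp => by_contra fun htp => ?_⟩
  have ht : t ≠ T.root := by rintro rfl; exact htp (inSubtree_root p)
  exact hmin _ (parent_mem_of_connected hS htS hp htp) (depth_parent_lt ht)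

lemma exists_forall_mem_or_parent_mem {ι : Type} [Finite ι] [Nonempty ι] {S : ι → Set P}
    (hS : ∀ i, (T.graph.induce (S i)).Connected)
    (hU : ∀ i j, i ≠ j → (T.graph.induce (S i ∪ S j)).Connected) :
    ∃ t, ∀ i, t ∈ S i ∨ T.parent t ∈ S i := by
  choose top hmem htop using fun i => exists_forall_inSubtree (hS i)
  obtain ⟨m, hm⟩ := Finite.exists_max fun i => T.depth (top i)
  refine ⟨top m, fun i => ?_⟩
  by_cases him : i = m
  · exact Or.inl (him ▸ hmem i)
  by_cases hsub : T.inSubtree (top m) (top i)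
  · exact Or.inl (eq_of_inSubtree_of_depth_le hsub (hm i) ▸ hmem i)
  have hroot : top m ≠ T.root := by rintro h; exact hsub (h ▸ inSubtree_root _)
  rcases parent_mem_of_connected (hU i m him) (Or.inr (hmem m)) (Or.inl (hmem i)) hsub
    with h | h
  · exact Or.inr h
  · exact absurd (htop m _ h) (not_inSubtree_parent hroot)

end RTree

lemma QDec.connected_of_mem_var_iff {V A P : Type} {Q : CQ V A} {T : RTree P}
    (D : QDec Q T) (hpure : D.pure) {v : V} {a b : A}
    (hv : ∀ c, v ∈ Q.var c ↔ c = a ∨ c = b) :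
    (T.graph.induce ({p | a ∈ D.la p} ∪ {p | b ∈ D.la p})).Connected := by
  have hset : {p | v ∈ D.lv p ∨ ∃ c ∈ D.la p, v ∈ Q.var c} =
      {p | a ∈ D.la p} ∪ {p | b ∈ D.la p} := by
    ext p
    simp only [hpure p, Set.mem_empty_iff_false, false_or, hv, Set.mem_union,
      Set.mem_ofPred_eq]
    constructor
    · rintro ⟨c, hc, rfl | rfl⟩
      exacts [Or.inl hc, Or.inr hc]
    · rintro (h | h)
      exacts [⟨a, h, Or.inl rfl⟩, ⟨b, h, Or.inr rfl⟩]
  exact hset ▸ D.connV v (Set.mem_iUnion.2 ⟨a, (hv a).2 (Or.inl rfl)⟩)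

lemma Set.union_eq_and_ncard_eq_of_subset_union {α : Type} {s t u : Set α} {k : ℕ}
    (hs : s.Finite) (ht : t.Finite) (hsk : s.ncard ≤ k) (htk : t.ncard ≤ k)
    (hu : u ⊆ s ∪ t) (huk : u.ncard = 2 * k) :
    s ∪ t = u ∧ s.ncard = k ∧ t.ncard = k := by
  have hle := Set.ncard_le_ncard hu (hs.union ht)
  have hunion := Set.ncard_union_le s t
  exact ⟨(Set.eq_of_subset_of_ncard_le hu (by omega) (hs.union ht)).symm, by omega, by omega⟩

lemma mem_var_iff_of_blocks {V A : Type} (Q : CQ V A) (Vv : Fin 8 → Fin 8 → V)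
    (Pa : Fin 8 → A)
    (hVinj : ∀ i j i' j' : Fin 8, i < j → i' < j' → Vv i j = Vv i' j' → i = i' ∧ j = j')
    (Γ : Set V) (hΓ : Γ = {x : V | ∃ i j : Fin 8, i < j ∧ x = Vv i j})
    (hvarP : ∀ i : Fin 8, Q.var (Pa i) ∩ Γ =
      {x : V | (∃ k : Fin 8, k < i ∧ x = Vv k i) ∨ (∃ k : Fin 8, i < k ∧ x = Vv i k)})
    (hout : ∀ a : A, a ∉ Set.range Pa → Q.var a ∩ Γ = ∅) {i j : Fin 8} (hij : i < j) (c : A) :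
    Vv i j ∈ Q.var c ↔ c = Pa i ∨ c = Pa j := by
  have hΓij : Vv i j ∈ Γ := hΓ ▸ ⟨i, j, hij, rfl⟩
  constructor
  · intro hc
    by_cases hr : c ∈ Set.range Pa
    · obtain ⟨l, rfl⟩ := hr
      have : Vv i j ∈ Q.var (Pa l) ∩ Γ := ⟨hc, hΓij⟩
      rw [hvarP l] at this
      rcases this with ⟨k, hkl, heq⟩ | ⟨k, hlk, heq⟩
      · exact Or.inr (congrArg Pa (hVinj i j k l hij hkl heq).2.symm)
      · exact Or.inl (congrArg Pa (hVinj i j l k hij hlk heq).1.symm)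
    · have : Vv i j ∈ Q.var c ∩ Γ := ⟨hc, hΓij⟩
      rw [hout c hr] at this
      exact this.elim
  · rintro (rfl | rfl)
    · exact ((hvarP i).symm ▸ Or.inr ⟨j, hij, rfl⟩ : Vv i j ∈ Q.var (Pa i) ∩ Γ).1
    · exact ((hvarP j).symm ▸ Or.inl ⟨i, hij, rfl⟩ : Vv i j ∈ Q.var (Pa j) ∩ Γ).1

/-- Lemma on blocks: if `Q` contains variables `Γ = {V_{ij} | 1 ≤ i < j ≤ 8}` and eight
atoms `Π = {P_1,…,P_8}` with `var(P_i) ∩ Γ = {V_{ki} : k < i} ∪ {V_{ik} : i < k}`, and no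
atom outside `Π` meets `Γ`, then any pure query decomposition of width 4 of `Q` has two
adjacent vertices `p₁, p₂` with `|λ(p₁)| = |λ(p₂)| = 4` and `λ(p₁) ∪ λ(p₂) = Π`. -/
theorem stmt_2 {V A P : Type} (Q : CQ V A) (T : RTree P)
    (Vv : Fin 8 → Fin 8 → V) (Pa : Fin 8 → A)
    (hVinj : ∀ i j i' j' : Fin 8, i < j → i' < j' → Vv i j = Vv i' j' → i = i' ∧ j = j')
    (hPinj : Function.Injective Pa)
    (Γ : Set V) (hΓ : Γ = {x : V | ∃ i j : Fin 8, i < j ∧ x = Vv i j})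
    (hvarP : ∀ i : Fin 8, Q.var (Pa i) ∩ Γ =
      {x : V | (∃ k : Fin 8, k < i ∧ x = Vv k i) ∨ (∃ k : Fin 8, i < k ∧ x = Vv i k)})
    (hout : ∀ a : A, a ∉ Set.range Pa → Q.var a ∩ Γ = ∅)
    (D : QDec Q T) (hpure : D.pure) (hw : D.widthLE 4) :
    ∃ p₁ p₂ : P, T.graph.Adj p₁ p₂ ∧ (D.la p₁).ncard = 4 ∧ (D.la p₂).ncard = 4 ∧
      D.la p₁ ∪ D.la p₂ = Set.range Pa := by
  have hpair : ∀ i j : Fin 8, i < j →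
      (T.graph.induce ({p | Pa i ∈ D.la p} ∪ {p | Pa j ∈ D.la p})).Connected :=
    fun i j hij => D.connected_of_mem_var_iff hpure
      (mem_var_iff_of_blocks Q Vv Pa hVinj Γ hΓ hvarP hout hij)
  obtain ⟨t, ht⟩ := RTree.exists_forall_mem_or_parent_mem (S := fun i => {p | Pa i ∈ D.la p})
    (fun i => D.connA (Pa i)) fun i j hij => by
      rcases hij.lt_or_gt with h | h
      · exact hpair i j h
      · exact Set.union_comm _ _ ▸ hpair j i h
  have hwidth (p : P) : (D.la p).Finite ∧ (D.la p).ncard ≤ 4 :=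
    ⟨(hw p).1, le_of_add_le_left (hw p).2.2⟩
  have hcard : (Set.range Pa).ncard = 2 * 4 := by
    rw [← Set.image_univ, Set.ncard_image_of_injective _ hPinj, Set.ncard_univ, Nat.card_fin]
  obtain ⟨hunion, h₁, h₂⟩ := Set.union_eq_and_ncard_eq_of_subset_union (hwidth t).1
    (hwidth _).1 (hwidth t).2 (hwidth _).2 (by rintro _ ⟨i, rfl⟩; exact ht i) hcard
  have hroot : t ≠ T.root := by
    rintro rfl
    rw [T.parent_root, Set.union_self] at hunion
    rw [hunion] at h₁
    omega
  exact ⟨t, T.parent t, Or.inl ⟨hroot, rfl⟩, h₁, h₂, hunion⟩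
end

section
/- Let (T,χ,λ) be a hypertree decomposition of a conjunctive query Q, let r be a vertex of T, let s be a child of r, and let C be an [χ(r)]-component of Q such that C ∩ χ(T_s) ≠ ∅. Then every vertex of T whose χ-label intersects C belongs to the subtree T_s rooted at s. -/
/-!
A `[χ(r)]`-path never passes through `χ(r)`, and each of its steps lies in one atom, hence in one
`χ`-label. By the connectedness condition the labels containing a variable outside `χ(r)` form a
subtree avoiding `r`; once such a subtree meets `T_s` it stays inside `T_s`, because the only edge
leaving `T_s` ends in `r`. Starting from a variable of `C ∩ χ(T_s)`, the path to any other variable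
of `C` therefore never leaves `χ(T_s)`, and neither do the labels containing its endpoint.
-/

namespace RTree

variable {P : Type} (T : RTree P)

theorem inSubtree_parent_of_ne {s p : P} (hp : T.inSubtree s p) (hps : p ≠ s) :
    T.inSubtree s (T.parent p) := by
  obtain ⟨n | n, hn⟩ := hp
  · exact absurd hn hps
  · exact ⟨n, hn⟩

theorem inSubtree_of_parent {s p : P} (hp : T.inSubtree s (T.parent p)) : T.inSubtree s p := by
  obtain ⟨n, hn⟩ := hp
  exact ⟨n + 1, hn⟩

theorem inSubtree_of_adj {s x y : P} (hx : T.inSubtree s x) (hxy : T.graph.Adj x y)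
    (hy : y ≠ T.parent s) : T.inSubtree s y := by
  rcases hxy with ⟨-, rfl⟩ | ⟨-, rfl⟩
  · exact T.inSubtree_parent_of_ne hx fun hxs => hy (hxs ▸ rfl)
  · exact T.inSubtree_of_parent hx

theorem inSubtree_of_preconnected {s : P} {U : Set P} (hU : (T.graph.induce U).Preconnected)
    (hsU : T.parent s ∉ U) {q p : U} (hq : T.inSubtree s q) : T.inSubtree s p := by
  have hqp := (SimpleGraph.reachable_iff_reflTransGen q p).mp (hU q p)
  induction hqp with
  | refl => exact hq
  | tail _ hxy ih => exact T.inSubtree_of_adj ih hxy fun h => hsU (h ▸ Subtype.prop _)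

end RTree

namespace HTD

variable {V A P : Type} {Q : CQ V A} {T : RTree P} (D : HTD Q T)

theorem mem_χSub {s : P} {v : V} : v ∈ D.χSub s ↔ ∃ q, T.inSubtree s q ∧ v ∈ D.χ q := by
  simp [χSub]

theorem inSubtree_of_mem_χ {s p : P} {v : V} (hv : v ∈ Q.vars) (hvs : v ∉ D.χ (T.parent s))
    (hsub : v ∈ D.χSub s) (hp : v ∈ D.χ p) : T.inSubtree s p := by
  obtain ⟨q, hq, hvq⟩ := D.mem_χSub.mp hsub
  exact T.inSubtree_of_preconnected (D.conn v hv).preconnected (U := {p | v ∈ D.χ p}) hvs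
    (q := ⟨q, hvq⟩) (p := ⟨p, hp⟩) hq

theorem mem_χSub_of_adjOut {s : P} {x y : V} (hxy : Q.adjOut (D.χ (T.parent s)) x y)
    (hx : x ∈ D.χSub s) : y ∈ D.χSub s := by
  obtain ⟨a, hxa, hya, hxs, -⟩ := hxy
  obtain ⟨p, hap⟩ := D.cover a
  have hp : T.inSubtree s p := D.inSubtree_of_mem_χ (Set.mem_iUnion.mpr ⟨a, hxa⟩) hxs hx (hap hxa)
  exact D.mem_χSub.mpr ⟨p, hp, hap hya⟩

theorem mem_χSub_of_reflTransGen {s : P} {x y : V}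
    (hxy : Relation.ReflTransGen (Q.adjOut (D.χ (T.parent s))) x y) (hx : x ∈ D.χSub s) :
    y ∈ D.χSub s := by
  induction hxy with
  | refl => exact hx
  | tail _ hyz ih => exact D.mem_χSub_of_adjOut hyz ih

end HTD

/-- If `s` is a child of `r` and `C` is a `[χ(r)]`-component with `C ∩ χ(T_s) ≠ ∅`,
then every vertex whose `χ` label meets `C` lies in the subtree `T_s`. -/
theorem stmt_5 {V A P : Type} (Q : CQ V A) (T : RTree P) (D : HTD Q T)
    (r s : P) (hcs : T.child s r) (C : Set V) (hC : Q.IsComp (D.χ r) C)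
    (hint : (C ∩ D.χSub s).Nonempty) :
    ∀ p : P, (D.χ p ∩ C).Nonempty → T.inSubtree s p := by
  rintro p ⟨w, hwp, hwC⟩
  obtain ⟨v, hvC, hvs⟩ := hint
  rw [← hcs.2] at hC
  obtain ⟨-, ⟨hCout, hCconn⟩, -⟩ := hC
  have hws : w ∈ D.χSub s := D.mem_χSub_of_reflTransGen (hCconn v hvC w hwC) hvs
  exact D.inSubtree_of_mem_χ (hCout hwC).1 (hCout hwC).2 hws hwp
end

section
/- Let (T,χ,λ) be a normal-form hypertree decomposition of a conjunctive query Q, v a vertex of T, and W = treecomp(v) − χ(v). Then for any [χ(v)]-component C with C ∩ W ≠ ∅, we have C ⊆ W; consequently the [χ(v)]-components contained in treecomp(v) form a partition of treecomp(v) − χ(v). -/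
/-!
A variable `x ∈ treecomp(v) − χ(v)` lies in `χ(T_v)`, and the vertices whose label contains `x`
form a connected subtree avoiding `v`, hence lying inside `T_v`. So every atom containing `x` is
covered by a vertex of `T_v`, and any `[χ(v)]`-neighbour `y` of `x` lies in
`χ(T_v) − χ(v) ⊆ treecomp(v)`. Thus `treecomp(v) − χ(v)` is closed under `[χ(v)]`-adjacency,
and a component, being a class of its reflexive-transitive closure, that meets it lies in it.
-/

namespace CQ

variable {V A : Type} (Q : CQ V A)

instance (S : Set V) : Std.Symm (Q.adjOut S) where
  symm _ _ := fun ⟨a, hx, hy, hxS, hyS⟩ => ⟨a, hy, hx, hyS, hxS⟩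

def compOf (S : Set V) (x : V) : Set V :=
  {y | y ∈ Q.vars \ S ∧ Relation.ReflTransGen (Q.adjOut S) x y}

variable {Q} {S C : Set V} {x : V}

lemma mem_compOf_self (hx : x ∈ Q.vars \ S) : x ∈ Q.compOf S x :=
  ⟨hx, Relation.ReflTransGen.refl⟩

lemma connSet_compOf : Q.ConnSet S (Q.compOf S x) :=
  ⟨fun _ hy => hy.1, fun _ hy _ hz => (Std.Symm.symm _ _ hy.2).trans hz.2⟩

lemma isComp_compOf (hx : x ∈ Q.vars \ S) : Q.IsComp S (Q.compOf S x) :=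
  ⟨⟨x, mem_compOf_self hx⟩, connSet_compOf, fun _ hC' hsub =>
    (hsub.antisymm fun y hy => ⟨hC'.1 hy, hC'.2 x (hsub (mem_compOf_self hx)) y hy⟩).symm⟩

lemma IsComp.eq_compOf (hC : Q.IsComp S C) (hx : x ∈ C) : C = Q.compOf S x :=
  (hC.2.2 _ connSet_compOf fun y hy => ⟨hC.2.1.1 hy, hC.2.1.2 x hx y hy⟩).symm

lemma IsComp.subset_of_adjOut_closed {W : Set V} (hC : Q.IsComp S C)
    (hW : ∀ x ∈ W, ∀ y, Q.adjOut S x y → y ∈ W) (hx : x ∈ C ∩ W) : C ⊆ W := by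
  intro y hy
  have hxy := hC.2.1.2 x hx.1 y hy
  clear hy
  induction hxy with
  | refl => exact hx.2
  | tail _ hzy ih => exact hW _ ih _ hzy

end CQ

namespace RTree

variable {P : Type} (T : RTree P) {v : P}

lemma inSubtree_of_adj_s8 {a b : P} (ha : T.inSubtree v a) (hav : a ≠ v)
    (hab : T.graph.Adj a b) : T.inSubtree v b := by
  obtain ⟨n, hn⟩ := ha
  rcases hab with ⟨-, hpa⟩ | ⟨-, hpb⟩
  · cases n with
    | zero => exact absurd hn hav
    | succ m => exact ⟨m, by rw [← hn, Function.iterate_succ_apply, hpa]⟩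
  · exact ⟨n + 1, by rw [Function.iterate_succ_apply, hpb, hn]⟩

lemma inSubtree_of_reachable {S : Set P} (hv : v ∉ S) {a b : S}
    (hab : (T.graph.induce S).Reachable a b) (ha : T.inSubtree v a) :
    T.inSubtree v b := by
  obtain ⟨w⟩ := hab
  induction w with
  | nil => exact ha
  | @cons x _ _ hxy _ ih =>
    exact ih (T.inSubtree_of_adj_s8 ha (fun hxv => hv (hxv ▸ x.2)) hxy)

end RTree

namespace HTD

variable {V A P : Type} {Q : CQ V A} {T : RTree P} (D : HTD Q T)

lemma exists_inSubtree_var_subset {v : P} {x : V} {a : A} (hx : x ∈ D.χSub v \ D.χ v)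
    (hxa : x ∈ Q.var a) : ∃ p, T.inSubtree v p ∧ Q.var a ⊆ D.χ p := by
  obtain ⟨p, hp⟩ := D.cover a
  obtain ⟨q, hq⟩ := Set.mem_iUnion₂.mp hx.1
  have hxQ : x ∈ Q.vars := Set.mem_iUnion.mpr ⟨a, hxa⟩
  have hreach : (T.graph.induce {p | x ∈ D.χ p}).Reachable ⟨q, hq.2⟩ ⟨p, hp hxa⟩ :=
    (D.conn x hxQ).preconnected _ _
  exact ⟨p, T.inSubtree_of_reachable hx.2 hreach hq.1, hp⟩

variable {D} {tc : P → Set V}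

lemma IsTreeComp.subset_vars (htc : D.IsTreeComp tc) (v : P) : tc v ⊆ Q.vars := by
  by_cases hv : v = T.root
  · rw [hv, htc.1]
  · exact fun x hx => ((htc.2 v hv).1.2.1.1 hx).1

lemma IsTreeComp.adjOut_closed (htc : D.IsTreeComp tc) (v : P) :
    ∀ x ∈ tc v \ D.χ v, ∀ y, Q.adjOut (D.χ v) x y → y ∈ tc v \ D.χ v := by
  rintro x hx y ⟨a, hxa, hya, -, hyv⟩
  by_cases hv : v = T.root
  · exact ⟨hv ▸ htc.1 ▸ Set.mem_iUnion.mpr ⟨a, hya⟩, hyv⟩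
  obtain ⟨-, hχSub⟩ := htc.2 v hv
  obtain ⟨p, hvp, hap⟩ :=
    D.exists_inSubtree_var_subset ⟨hχSub ▸ Or.inl hx.1, hx.2⟩ hxa
  have hy : y ∈ tc v ∪ (D.χ v ∩ D.χ (T.parent v)) := hχSub ▸ Set.mem_biUnion hvp (hap hya)
  exact ⟨hy.resolve_right fun h => hyv h.1, hyv⟩

end HTD

theorem stmt_8_general {V A P : Type} (Q : CQ V A) (T : RTree P) (D : HTD Q T)
    (tc : P → Set V) (htc : D.IsTreeComp tc) (v : P) :
    (∀ C : Set V, Q.IsComp (D.χ v) C → (C ∩ (tc v \ D.χ v)).Nonempty →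
        C ⊆ tc v \ D.χ v) ∧
    (∀ x ∈ tc v \ D.χ v, ∃! C : Set V, Q.IsComp (D.χ v) C ∧ C ⊆ tc v ∧ x ∈ C) := by
  have hclosed := htc.adjOut_closed v
  refine ⟨fun C hC ⟨x, hx⟩ => hC.subset_of_adjOut_closed hclosed hx, fun x hx => ?_⟩
  have hxQ : x ∈ Q.vars \ D.χ v := ⟨htc.subset_vars v hx.1, hx.2⟩
  have hcomp := CQ.isComp_compOf hxQ
  refine ⟨Q.compOf (D.χ v) x, ⟨hcomp, ?_, CQ.mem_compOf_self hxQ⟩, ?_⟩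
  · exact fun y hy => (hcomp.subset_of_adjOut_closed hclosed ⟨CQ.mem_compOf_self hxQ, hx⟩ hy).1
  · rintro C ⟨hC, -, hxC⟩
    exact hC.eq_compOf hxC

/-- In a normal-form hypertree decomposition, for any vertex `v` and
`W = treecomp(v) − χ(v)`: any `[χ(v)]`-component meeting `W` is contained in `W`;
consequently, the `[χ(v)]`-components contained in `treecomp(v)` partition `W`. -/
theorem stmt_8 {V A P : Type} (Q : CQ V A) (T : RTree P) (D : HTD Q T)
    (hnf : D.NF) (tc : P → Set V) (htc : D.IsTreeComp tc) (v : P) :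
    (∀ C : Set V, Q.IsComp (D.χ v) C → (C ∩ (tc v \ D.χ v)).Nonempty →
        C ⊆ tc v \ D.χ v) ∧
    (∀ x ∈ tc v \ D.χ v, ∃! C : Set V, Q.IsComp (D.χ v) C ∧ C ⊆ tc v ∧ x ∈ C) :=
  stmt_8_general Q T D tc htc v
end

section
/- Every query decomposition of width c of a conjunctive query Q can be converted into a pure query decomposition of Q of width c on the same tree (i.e., by only changing the labeling). -/
/-!
Replace every variable `v` in the label of a node `p` by one atom containing `v`. Inside the
connected set of nodes where `v` occurs, fix a map moving each node not covered by an atom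
containing `v` one edge closer to such a node. Following it from `p` ends at a covered node `r`;
every node passed on the way still carries `v` as a variable and ends at the same `r`, so giving
all of them the atom chosen at `r` keeps the occurrences of that atom, and of every variable,
connected. Since each variable is traded for at most one atom, the width does not grow.
-/

namespace SimpleGraph

variable {α : Type*} {G : SimpleGraph α}

structure IsDescentTo (G : SimpleGraph α) (S H : Set α) (f : α → α) : Prop where
  map_eq_self : ∀ x ∈ H, f x = x
  map_mem_adj : ∀ x ∈ S, x ∉ H → f x ∈ S ∧ G.Adj x (f x)
  exists_iterate_mem : ∀ x ∈ S, ∃ n, f^[n] x ∈ H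

theorem Connected.exists_isDescentTo (hG : G.Connected) {H : Set α} (hH : H.Nonempty) :
    ∃ f : α → α, G.IsDescentTo Set.univ H f := by
  classical
  have hwalk : ∀ x, ∃ n, ∃ h ∈ H, ∃ w : G.Walk x h, w.length = n := fun x =>
    let ⟨h, hh⟩ := hH
    let ⟨w⟩ := hG.preconnected x h
    ⟨w.length, h, hh, w, rfl⟩
  let d x := Nat.find (hwalk x)
  have hstep : ∀ x ∉ H, ∃ y, G.Adj x y ∧ d y < d x := by
    intro x hx
    obtain ⟨h, hh, w, hw⟩ := Nat.find_spec (hwalk x)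
    cases w with
    | nil => exact absurd hh hx
    | cons hadj w' =>
      refine ⟨_, hadj, lt_of_le_of_lt (Nat.find_min' _ ⟨h, hh, w', rfl⟩) ?_⟩
      rw [Walk.length_cons] at hw
      exact (show w'.length < Nat.find (hwalk x) by omega)
  choose g hg using hstep
  refine ⟨fun x => if hx : x ∈ H then x else g x hx,
    ⟨fun x hx => dif_pos hx, fun x _ hx => ⟨trivial, by rw [dif_neg hx]; exact (hg x hx).1⟩, ?_⟩⟩
  intro x _
  induction hdx : d x using Nat.strong_induction_on generalizing x with
  | _ k ih =>
    by_cases hx : x ∈ H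
    · exact ⟨0, hx⟩
    · obtain ⟨n, hn⟩ := ih _ (hdx ▸ (hg x hx).2) (g x hx) trivial rfl
      exact ⟨n + 1, by rw [Function.iterate_succ_apply, dif_neg hx]; exact hn⟩

theorem exists_isDescentTo_of_induce_connected {S H : Set α} (hS : (G.induce S).Connected)
    (hHS : H ⊆ S) (hH : H.Nonempty) : ∃ f : α → α, G.IsDescentTo S H f := by
  classical
  obtain ⟨h, hh⟩ := hH
  obtain ⟨f, hf⟩ := hS.exists_isDescentTo (H := Subtype.val ⁻¹' H) ⟨⟨h, hHS hh⟩, hh⟩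
  let F x := if hx : x ∈ S then (f ⟨x, hx⟩ : α) else x
  have hF : Function.Semiconj Subtype.val f F := fun x => by simp only [F, dif_pos x.2]
  refine ⟨F, fun x hx => ?_, fun x hx hxH => ?_, fun x hx => ?_⟩
  · rw [← show ((⟨x, hHS hx⟩ : S) : α) = x from rfl, ← hF, hf.map_eq_self _ hx]
  · rw [← show ((⟨x, hx⟩ : S) : α) = x from rfl, ← hF]
    exact ⟨Subtype.prop _, (hf.map_mem_adj ⟨x, hx⟩ trivial hxH).2⟩
  · obtain ⟨n, hn⟩ := hf.exists_iterate_mem ⟨x, hx⟩ trivial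
    exact ⟨n, by rw [← show ((⟨x, hx⟩ : S) : α) = x from rfl, ← (hF.iterate_right n)]; exact hn⟩

theorem IsDescentTo.induce_reachable {S H N : Set α} {f : α → α} (hf : G.IsDescentTo S H f)
    {y : α} (hyN : y ∈ N) (hN : ∀ x ∈ S, x ∉ H → (∃ n, f^[n] x = y) → x ∈ N) (n : ℕ) {x : α}
    (hxS : x ∈ S) (hxy : f^[n] x = y) :
    ∃ hxN : x ∈ N, (G.induce N).Reachable ⟨x, hxN⟩ ⟨y, hyN⟩ := by
  induction n generalizing x with
  | zero => subst hxy; exact ⟨hyN, .refl _⟩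
  | succ n ih =>
    by_cases hxH : x ∈ H
    · rw [Function.iterate_fixed (hf.map_eq_self x hxH)] at hxy
      subst hxy; exact ⟨hyN, .refl _⟩
    · obtain ⟨hfS, hadj⟩ := hf.map_mem_adj x hxS hxH
      obtain ⟨hfN, hreach⟩ := ih hfS (by rwa [← Function.iterate_succ_apply])
      have hxN := hN x hxS hxH ⟨n + 1, hxy⟩
      have hstep : (G.induce N).Adj ⟨x, hxN⟩ ⟨f x, hfN⟩ := hadj
      exact ⟨hxN, hstep.reachable.trans hreach⟩

theorem induce_connected_of_forall_reachable {B N : Set α}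
    (hB : (G.induce B).Connected) (hBN : B ⊆ N)
    (h : ∀ x (hx : x ∈ N), ∃ y, ∃ hy : y ∈ B, (G.induce N).Reachable ⟨x, hx⟩ ⟨y, hBN hy⟩) :
    (G.induce N).Connected := by
  obtain ⟨u⟩ := hB.nonempty
  refine (connected_iff_exists_forall_reachable _).2 ⟨⟨u, hBN u.2⟩, fun ⟨x, hx⟩ => ?_⟩
  obtain ⟨y, hy, hxy⟩ := h x hx
  exact (hxy.trans ((hB.preconnected ⟨y, hy⟩ u).map (induceHomOfLE G hBN).toHom)).symm

end SimpleGraph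

namespace Function

variable {α : Type*}

open Classical in
noncomputable def landing (f : α → α) (H : Set α) (x : α) : α :=
  if h : ∃ n, f^[n] x ∈ H then f^[Nat.find h] x else x

theorem landing_spec {f : α → α} {H : Set α} {x : α} (h : ∃ n, f^[n] x ∈ H) :
    landing f H x ∈ H ∧ ∃ n, f^[n] x = landing f H x := by
  classical
  rw [landing, dif_pos h]
  exact ⟨Nat.find_spec h, _, rfl⟩

theorem landing_eq_of_iterate_mem {f : α → α} {H : Set α} (hfix : ∀ z ∈ H, f z = z) {x : α}
    {n : ℕ} (hn : f^[n] x ∈ H) : landing f H x = f^[n] x := by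
  classical
  have h : ∃ n, f^[n] x ∈ H := ⟨n, hn⟩
  have hle : Nat.find h ≤ n := Nat.find_min' h hn
  rw [landing, dif_pos h, ← Nat.sub_add_cancel hle, iterate_add_apply,
    iterate_fixed (hfix _ (Nat.find_spec h))]

end Function

namespace QDec

variable {V A P : Type} {Q : CQ V A} {T : RTree P} (D : QDec Q T)

def atomOcc (v : V) : Set P := {p | ∃ a ∈ D.la p, v ∈ Q.var a}

def occ (v : V) : Set P := {p | v ∈ D.lv p ∨ ∃ a ∈ D.la p, v ∈ Q.var a}

structure Purifier where
  step : Q.vars → P → P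
  pick : Q.vars → P → A
  isDescentTo : ∀ v : Q.vars, T.graph.IsDescentTo (D.occ v) (D.atomOcc v) (step v)
  pick_mem : ∀ v : Q.vars, ∀ q ∈ D.atomOcc v, pick v q ∈ D.la q
  mem_var_pick : ∀ v : Q.vars, ∀ q ∈ D.atomOcc v, ↑v ∈ Q.var (pick v q)

theorem nonempty_purifier : Nonempty D.Purifier := by
  classical
  have hdesc : ∀ v : Q.vars, ∃ f, T.graph.IsDescentTo (D.occ v) (D.atomOcc v) f := fun v => by
    obtain ⟨a, ha⟩ := Set.mem_iUnion.1 v.2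
    obtain ⟨p, hp⟩ := D.coverA a
    exact SimpleGraph.exists_isDescentTo_of_induce_connected (D.connV v v.2) (fun _ => Or.inr)
      ⟨p, a, hp, ha⟩
  have hpick : ∀ v : Q.vars, ∃ g : P → A, ∀ q ∈ D.atomOcc v, g q ∈ D.la q ∧ ↑v ∈ Q.var (g q) :=
    fun v => by
      obtain ⟨a, -⟩ := Set.mem_iUnion.1 v.2
      exact ⟨fun q => if hq : q ∈ D.atomOcc v then hq.choose else a,
        fun q hq => by simpa only [dif_pos hq] using hq.choose_spec⟩
  choose step hstep using hdesc
  choose pick hpick using hpick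
  exact ⟨step, pick, hstep, fun v q hq => (hpick v q hq).1, fun v q hq => (hpick v q hq).2⟩

namespace Purifier

variable {D} (R : D.Purifier)

noncomputable def landing (v : Q.vars) (p : P) : P :=
  Function.landing (R.step v) (D.atomOcc v) p

/-- Depending on `p` only through the landing point of its descent is what keeps the nodes
receiving a given atom connected. -/
noncomputable def anchor (v : Q.vars) (p : P) : A := R.pick v (R.landing v p)

def label (p : P) : Set A := D.la p ∪ (fun v => R.anchor v p) '' {v | ↑v ∈ D.lv p}

theorem landing_mem_atomOcc {v : Q.vars} {p : P} (hp : ↑v ∈ D.lv p) :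
    R.landing v p ∈ D.atomOcc v :=
  (Function.landing_spec ((R.isDescentTo v).exists_iterate_mem p (Or.inl hp))).1

theorem anchor_mem_la_landing {v : Q.vars} {p : P} (hp : ↑v ∈ D.lv p) :
    R.anchor v p ∈ D.la (R.landing v p) :=
  R.pick_mem v _ (R.landing_mem_atomOcc hp)

theorem mem_var_anchor {v : Q.vars} {p : P} (hp : ↑v ∈ D.lv p) : ↑v ∈ Q.var (R.anchor v p) :=
  R.mem_var_pick v _ (R.landing_mem_atomOcc hp)

theorem reachable_landing {v : Q.vars} {x : P} (hx : ↑v ∈ D.lv x) {N : Set P}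
    (hN : ∀ x', ↑v ∈ D.lv x' → R.anchor v x' = R.anchor v x → x' ∈ N)
    (hyN : R.landing v x ∈ N) :
    ∃ hxN : x ∈ N, (T.graph.induce N).Reachable ⟨x, hxN⟩ ⟨_, hyN⟩ := by
  have hf := R.isDescentTo v
  obtain ⟨hyH, n, hn⟩ : R.landing v x ∈ D.atomOcc v ∧ ∃ n, (R.step v)^[n] x = R.landing v x :=
    Function.landing_spec (hf.exists_iterate_mem x (Or.inl hx))
  refine hf.induce_reachable hyN
    (fun x' hx'S hx'H ⟨m, hm⟩ => hN x' (hx'S.resolve_right hx'H) ?_) n (Or.inl hx) hn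
  exact congrArg (R.pick v)
    ((Function.landing_eq_of_iterate_mem hf.map_eq_self (hm ▸ hyH)).trans hm)

theorem connected_label_atom (a : A) : (T.graph.induce {p | a ∈ R.label p}).Connected := by
  refine SimpleGraph.induce_connected_of_forall_reachable (D.connA a) (fun p hp => Or.inl hp) ?_
  rintro x (hx | ⟨v, hvx, rfl⟩)
  · exact ⟨x, hx, .refl _⟩
  · obtain ⟨_, h⟩ := R.reachable_landing (N := {p | R.anchor v x ∈ R.label p}) hvx
      (fun x' hx' he => Or.inr ⟨v, hx', he⟩) (Or.inl (R.anchor_mem_la_landing hvx))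
    exact ⟨_, R.anchor_mem_la_landing hvx, h⟩

theorem connected_label_var {w : V} (hw : w ∈ Q.vars) :
    (T.graph.induce {p | ∃ a ∈ R.label p, w ∈ Q.var a}).Connected := by
  have hocc : D.occ w ⊆ {p | ∃ a ∈ R.label p, w ∈ Q.var a} := by
    rintro p (hp | ⟨a, ha, hwa⟩)
    · exact ⟨_, Or.inr ⟨⟨w, hw⟩, hp, rfl⟩, R.mem_var_anchor (v := ⟨w, hw⟩) hp⟩
    · exact ⟨a, Or.inl ha, hwa⟩
  refine SimpleGraph.induce_connected_of_forall_reachable (D.connV w hw) hocc ?_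
  rintro x ⟨a, (ha | ⟨v, hvx, rfl⟩), hwa⟩
  · exact ⟨x, Or.inr ⟨_, ha, hwa⟩, .refl _⟩
  · have hy : R.landing v x ∈ D.occ w := Or.inr ⟨_, R.anchor_mem_la_landing hvx, hwa⟩
    obtain ⟨_, h⟩ := R.reachable_landing (N := {p | ∃ a ∈ R.label p, w ∈ Q.var a}) hvx
      (fun x' hx' he => ⟨_, Or.inr ⟨v, hx', he⟩, hwa⟩) (hocc hy)
    exact ⟨_, hy, h⟩

def toQDec : QDec Q T where
  la := R.label
  lv _ := ∅
  coverA a := let ⟨p, hp⟩ := D.coverA a; ⟨p, Or.inl hp⟩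
  connA := R.connected_label_atom
  connV w hw := by
    rw [show {p | w ∈ (∅ : Set V) ∨ ∃ a ∈ R.label p, w ∈ Q.var a} =
      {p | ∃ a ∈ R.label p, w ∈ Q.var a} from Set.ext fun _ => or_iff_right (Set.notMem_empty w)]
    exact R.connected_label_var hw

theorem toQDec_pure : R.toQDec.pure := fun _ => rfl

theorem toQDec_widthLE {c : ℕ} (hc : D.widthLE c) : R.toQDec.widthLE c := fun p => by
  obtain ⟨hla, hlv, hcard⟩ := hc p
  have hvars : {v : Q.vars | ↑v ∈ D.lv p}.Finite := hlv.preimage Subtype.val_injective.injOn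
  refine ⟨hla.union (hvars.image _), Set.finite_empty, ?_⟩
  calc (R.label p).ncard + (∅ : Set V).ncard
      ≤ (D.la p).ncard + {v : Q.vars | ↑v ∈ D.lv p}.ncard := by
        rw [Set.ncard_empty, add_zero]
        exact (Set.ncard_union_le _ _).trans (by gcongr; exact Set.ncard_image_le hvars)
    _ ≤ (D.la p).ncard + (D.lv p).ncard := by
        gcongr
        exact Set.ncard_le_ncard_of_injOn Subtype.val (fun _ hv => hv)
          Subtype.val_injective.injOn hlv
    _ ≤ c := hcard

end Purifier

end QDec

/-- Every query decomposition of width `c` of `Q` can be converted into a pure query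
decomposition of `Q` of width `c` on the same tree. -/
theorem stmt_14 {V A P : Type} (Q : CQ V A) (T : RTree P) (D : QDec Q T) (c : ℕ)
    (hw : D.widthLE c) :
    ∃ D' : QDec Q T, D'.pure ∧ D'.widthLE c := by
  obtain ⟨R⟩ := D.nonempty_purifier
  exact ⟨R.toQDec, R.toQDec_pure, R.toQDec_widthLE hw⟩
end
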